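/- Let < be a product order on k[X₁,…,Xₙ] and let g ∈ k[X] be nonzero with leading exponent β. Write g = φ(X₁)·X̄^{p(β)} + h, where h collects all terms whose X̄-exponent is strictly smaller than p(β) in the restricted term order. Then deg φ = β₁, and for any λ ∈ k: if φ(λ) ≠ 0 then the leading exponent of g(λ,X̄) ∈ k[X̄] is p(β); if φ(λ) = 0 and g(λ,X̄) ≠ 0 then the leading exponent of g(λ,X̄) is strictly smaller than p(β). -/
import Mathlib


open MvPolynomial

/-- `β` is the leading exponent of `f` with respect to the monomial order `m`. -/
def IsLeadExp {σ : Type*} {k : Type*} [CommSemiring k] (m : MonomialOrder σ)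
    (f : MvPolynomial σ k) (β : σ →₀ ℕ) : Prop :=
  β ∈ f.support ∧ ∀ α ∈ f.support, α ≠ β → m.toSyn α < m.toSyn β

/-- `C(I)`: the set of leading exponents of nonzero elements of the ideal `I`. -/
def expC {σ : Type*} {k : Type*} [CommSemiring k] (m : MonomialOrder σ)
    (I : Ideal (MvPolynomial σ k)) : Set (σ →₀ ℕ) :=
  {β | ∃ f ∈ I, IsLeadExp m f β}

/-- `D(I)`: the standard set (set of exponents of standard monomials) of the ideal `I`. -/
def expD {σ : Type*} {k : Type*} [CommSemiring k] (m : MonomialOrder σ)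
    (I : Ideal (MvPolynomial σ k)) : Set (σ →₀ ℕ) :=
  (expC m I)ᶜ

/-- The projection `ℕⁿ → ℕⁿ⁻¹` dropping the first coordinate. -/
noncomputable def pr {n : ℕ} (β : Fin (n + 1) →₀ ℕ) : Fin n →₀ ℕ :=
  Finsupp.comapDomain Fin.succ β (Fin.succ_injective n).injOn

/-- The embedding `ℕⁿ⁻¹ → ℕⁿ`, putting `0` in the first coordinate. -/
noncomputable def emb {n : ℕ} (α : Fin n →₀ ℕ) : Fin (n + 1) →₀ ℕ :=
  Finsupp.mapDomain Fin.succ α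

/-- `t` is a *product order* restricting to `tb`: `α < β` iff `p(α) < p(β)`, or
`p(α) = p(β)` and `α₁ < β₁`, where `p` drops the first coordinate. -/
def IsProductOrder {n : ℕ} (t : MonomialOrder (Fin (n + 1)))
    (tb : MonomialOrder (Fin n)) : Prop :=
  ∀ α β : Fin (n + 1) →₀ ℕ,
    (t.toSyn α < t.toSyn β ↔
      (tb.toSyn (pr α) < tb.toSyn (pr β) ∨ (pr α = pr β ∧ α 0 < β 0)))

/-- The fiber `A_λ = A ∩ {X₁ = λ}`, regarded as a subvariety of `𝔸ⁿ⁻¹`. -/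
def fiberAt {k : Type*} {n : ℕ} (A : Set (Fin (n + 1) → k)) (lam : k) :
    Set (Fin n → k) :=
  {y | Fin.cons lam y ∈ A}

/-- `A′` is a `d`-dimensional affine subspace of the affine space with coordinates `ι`. -/
def IsAffineDPlane {k : Type*} [Field k] {ι : Type*} [Fintype ι] (d : ℕ)
    (A' : Set (ι → k)) : Prop :=
  ∃ S : AffineSubspace k (ι → k),
    A' = (S : Set (ι → k)) ∧ A'.Nonempty ∧ Module.finrank k S.direction = d

/-- `{X_j : j ∈ J}` is a set of free variables of `A′`. -/
def IsFreeVars {k : Type*} [Field k] {ι : Type*} (A' : Set (ι → k)) (J : Finset ι) :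
    Prop :=
  ∀ v : ι → k, ∃! x, x ∈ A' ∧ ∀ j ∈ J, x j = v j

/-- `{X_j : j ∈ J}` is the set of *minimal* free variables of `A′`. -/
def IsMinFreeVars {k : Type*} [Field k] {ι : Type*} [LinearOrder ι] [DecidableEq ι]
    (A' : Set (ι → k)) (J : Finset ι) : Prop :=
  IsFreeVars A' J ∧ ∀ j ∈ J, ∀ i ∉ J, i < j → ¬ IsFreeVars A' (insert i (J.erase j))


lemma pr_apply' {n : ℕ} (β : Fin (n + 1) →₀ ℕ) (j : Fin n) : pr β j = β j.succ :=
  rfl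

lemma pr_eq_tail {n : ℕ} (β : Fin (n + 1) →₀ ℕ) : pr β = Finsupp.tail β := by
  ext j; rw [pr_apply', Finsupp.tail_apply]

lemma emb_succ {n : ℕ} (γ : Fin n →₀ ℕ) (j : Fin n) : emb γ j.succ = γ j :=
  Finsupp.mapDomain_apply (Fin.succ_injective n) _ _

lemma emb_zero {n : ℕ} (γ : Fin n →₀ ℕ) : emb γ 0 = 0 :=
  Finsupp.mapDomain_notin_range _ _ (by simp [Fin.succ_ne_zero])

lemma cons_eq_single_add_emb {n : ℕ} (i : ℕ) (γ : Fin n →₀ ℕ) :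
    Finsupp.cons i γ = Finsupp.single 0 i + emb γ := by
  ext j
  refine Fin.cases ?_ (fun j => ?_) j
  · simp [Finsupp.cons_zero, emb_zero]
  · simp [Finsupp.cons_succ, emb_succ, Finsupp.single_apply_eq_zero,
      (Fin.succ_ne_zero j).symm]

lemma pr_cons {n : ℕ} (i : ℕ) (γ : Fin n →₀ ℕ) : pr (Finsupp.cons i γ) = γ := by
  rw [pr_eq_tail, Finsupp.tail_cons]

lemma cons_pr {n : ℕ} (α : Fin (n + 1) →₀ ℕ) : Finsupp.cons (α 0) (pr α) = α := by
  rw [pr_eq_tail, Finsupp.cons_tail]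

lemma spec_eq {k : Type*} [CommSemiring k] {n : ℕ} (lam : k)
    (g : MvPolynomial (Fin (n + 1)) k) :
    MvPolynomial.aeval (Fin.cases (MvPolynomial.C lam) MvPolynomial.X) g
      = Polynomial.eval (MvPolynomial.C lam) (finSuccEquiv k n g) := by
  have h : (Polynomial.evalRingHom (MvPolynomial.C lam : MvPolynomial (Fin n) k)).comp
      (finSuccEquiv k n : MvPolynomial (Fin (n + 1)) k →+* Polynomial (MvPolynomial (Fin n) k))
      = (MvPolynomial.aeval
          (Fin.cases (MvPolynomial.C lam) MvPolynomial.X :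
            Fin (n + 1) → MvPolynomial (Fin n) k)).toRingHom := by
    apply MvPolynomial.ringHom_ext
    · intro r
      simp [MvPolynomial.finSuccEquiv_apply, MvPolynomial.eval₂Hom_C]
    · intro i
      refine Fin.cases ?_ (fun i => ?_) i
      · simp [finSuccEquiv_X_zero]
      · simp [finSuccEquiv_X_succ]
  exact (DFunLike.congr_fun h g).symm

lemma coeff_spec {k : Type*} [CommSemiring k] {n : ℕ} (lam : k)
    (g : MvPolynomial (Fin (n + 1)) k) (γ : Fin n →₀ ℕ) :
    MvPolynomial.coeff γ
        (MvPolynomial.aeval (Fin.cases (MvPolynomial.C lam) MvPolynomial.X) g)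
      = ∑ i ∈ Finset.range (g.totalDegree + 1),
          MvPolynomial.coeff (Finsupp.cons i γ) g * lam ^ i := by
  have hdeg : (finSuccEquiv k n g).natDegree < g.totalDegree + 1 := by
    rw [natDegree_finSuccEquiv]
    exact Nat.lt_succ_of_le (degreeOf_le_totalDegree g 0)
  rw [spec_eq, Polynomial.eval_eq_sum_range' hdeg]
  rw [MvPolynomial.coeff_sum]
  refine Finset.sum_congr rfl fun i _ => ?_
  rw [← MvPolynomial.C_pow, mul_comm, MvPolynomial.coeff_C_mul, finSuccEquiv_coeff_coeff, mul_comm]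

/-- For a product order and `g ≠ 0` with leading exponent `β`, writing
`g = φ(X₁)·X̄^{p(β)} + (smaller X̄-terms)`, the polynomial `φ` has degree `β₁`, and for
`λ ∈ k`: if `φ(λ) ≠ 0` the leading exponent of `g(λ,X̄)` is `p(β)`; if `φ(λ) = 0` and
`g(λ,X̄) ≠ 0`, its leading exponent is strictly smaller than `p(β)`. -/
theorem specialize_leadExp {k : Type*} [Field k] {n : ℕ}
    (t : MonomialOrder (Fin (n + 1))) (tb : MonomialOrder (Fin n))
    (hprod : IsProductOrder t tb)
    (g : MvPolynomial (Fin (n + 1)) k) (hg : g ≠ 0)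
    (β : Fin (n + 1) →₀ ℕ) (hβ : IsLeadExp t g β)
    (φ : Polynomial k)
    (hφ : φ = ∑ j ∈ Finset.range (g.totalDegree + 1),
      Polynomial.C (MvPolynomial.coeff (Finsupp.single 0 j + emb (pr β)) g) *
        Polynomial.X ^ j) :
    φ.natDegree = β 0 ∧
      ∀ lam : k,
        (φ.eval lam ≠ 0 →
          IsLeadExp tb
            (MvPolynomial.aeval (Fin.cases (MvPolynomial.C lam) MvPolynomial.X) g)
            (pr β)) ∧
        (φ.eval lam = 0 →
          MvPolynomial.aeval (Fin.cases (MvPolynomial.C lam) MvPolynomial.X) g ≠ 0 →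
          ∀ γ : Fin n →₀ ℕ,
            IsLeadExp tb
              (MvPolynomial.aeval (Fin.cases (MvPolynomial.C lam) MvPolynomial.X) g) γ →
            tb.toSyn γ < tb.toSyn (pr β)) := by
  classical
  have hβsupp := hβ.1
  have hβcoeff : MvPolynomial.coeff β g ≠ 0 := MvPolynomial.mem_support_iff.mp hβ.1
  have hβ0le : β 0 ≤ g.totalDegree := by
    refine le_trans ?_ (degreeOf_le_totalDegree g 0)
    rw [MvPolynomial.degreeOf_eq_sup]
    exact Finset.le_sup (f := fun m : Fin (n+1) →₀ ℕ => m 0) hβ.1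
  have hzero : ∀ i : ℕ, i ≠ β 0 →
      tb.toSyn (pr β) = tb.toSyn (pr β) →
      MvPolynomial.coeff (Finsupp.cons i (pr β)) g ≠ 0 → β 0 < i → False := by
    intro i hne _ hc hlt
    have hmem : Finsupp.cons i (pr β) ∈ g.support := MvPolynomial.mem_support_iff.mpr hc
    have hne' : Finsupp.cons i (pr β) ≠ β := by
      intro h
      apply hne
      have := congrArg (fun f : Fin (n + 1) →₀ ℕ => f 0) h
      simpa [Finsupp.cons_zero] using this
    have h1 := hβ.2 _ hmem hne'
    have h2 : t.toSyn β < t.toSyn (Finsupp.cons i (pr β)) := by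
      rw [hprod]
      right
      refine ⟨(pr_cons i (pr β)).symm, ?_⟩
      simpa [Finsupp.cons_zero] using hlt
    exact absurd h1 (not_lt.mpr h2.le)
  have hcoeffφ : ∀ i : ℕ, φ.coeff i =
      if i < g.totalDegree + 1 then
        MvPolynomial.coeff (Finsupp.cons i (pr β)) g else 0 := by
    intro i
    rw [hφ, Polynomial.finset_sum_coeff]
    simp only [Polynomial.coeff_C_mul, Polynomial.coeff_X_pow, mul_ite, mul_one, mul_zero]
    rw [Finset.sum_ite_eq (Finset.range (g.totalDegree + 1)) i]
    simp only [Finset.mem_range]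
    congr 1
    rw [cons_eq_single_add_emb]
  -- φ.natDegree = β 0
  have hcoeffβ0 : φ.coeff (β 0) ≠ 0 := by
    rw [hcoeffφ, if_pos (Nat.lt_succ_of_le hβ0le), cons_pr]
    exact hβcoeff
  have hhigh : ∀ i : ℕ, β 0 < i → φ.coeff i = 0 := by
    intro i hi
    rw [hcoeffφ]
    split_ifs with h
    · by_contra hc
      exact hzero i (Nat.ne_of_gt hi) rfl hc hi
    · rfl
  have hnd : φ.natDegree = β 0 := by
    refine le_antisymm ?_ (Polynomial.le_natDegree_of_ne_zero hcoeffβ0)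
    exact Polynomial.natDegree_le_iff_coeff_eq_zero.mpr fun m hm => hhigh m hm
  refine ⟨hnd, fun lam => ?_⟩
  -- key: coefficient of pr β in the specialization is φ.eval lam
  have hevalφ : φ.eval lam =
      MvPolynomial.coeff (pr β)
        (MvPolynomial.aeval (Fin.cases (MvPolynomial.C lam) MvPolynomial.X) g) := by
    rw [coeff_spec, hφ]
    simp only [Polynomial.eval_finset_sum, Polynomial.eval_mul, Polynomial.eval_C,
      Polynomial.eval_pow, Polynomial.eval_X]
    refine Finset.sum_congr rfl fun i _ => ?_
    rw [cons_eq_single_add_emb]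
  -- support bound
  set G := MvPolynomial.aeval
      (Fin.cases (MvPolynomial.C lam) MvPolynomial.X : Fin (n + 1) → MvPolynomial (Fin n) k) g
    with hG
  have hbound : ∀ γ ∈ G.support, tb.toSyn γ ≤ tb.toSyn (pr β) := by
    intro γ hγ
    by_contra hc
    rw [not_le] at hc
    have : MvPolynomial.coeff γ G = 0 := by
      rw [hG, coeff_spec]
      refine Finset.sum_eq_zero fun i _ => ?_
      have hz : MvPolynomial.coeff (Finsupp.cons i γ) g = 0 := by
        by_contra hne
        have hmem : Finsupp.cons i γ ∈ g.support := MvPolynomial.mem_support_iff.mpr hne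
        have hneq : Finsupp.cons i γ ≠ β := by
          intro h
          rw [← h, pr_cons] at hc
          exact lt_irrefl _ hc
        have h1 := hβ.2 _ hmem hneq
        have h2 : t.toSyn β < t.toSyn (Finsupp.cons i γ) := by
          rw [hprod]
          left
          rwa [pr_cons]
        exact absurd h1 (not_lt.mpr h2.le)
      rw [hz, zero_mul]
    exact absurd this (MvPolynomial.mem_support_iff.mp hγ)
  constructor
  · intro hne
    have hmem : pr β ∈ G.support := by
      rw [MvPolynomial.mem_support_iff, ← hevalφ]
      exact hne
    refine ⟨hmem, fun α hα hαne => ?_⟩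
    refine lt_of_le_of_ne (hbound α hα) fun h => hαne ?_
    exact tb.toSyn.injective h
  · intro h0 _ γ hγ
    have hnmem : pr β ∉ G.support := by
      rw [MvPolynomial.mem_support_iff, ← hevalφ, h0]
      simp
    have hγmem := hγ.1
    have hne : γ ≠ pr β := fun h => hnmem (h ▸ hγmem)
    refine lt_of_le_of_ne (hbound γ hγmem) fun h => hne (tb.toSyn.injective h)
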